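/- arXiv:1705.10826 — 2 statements merged into one kernel-verified Lean document; each statement's English description precedes it below -/
import Mathlib

section
/- Let C be an edge-weighted cycle on n ≥ 3 vertices with homebase v_0, invoking cost q ≥ 0, and let w_max be the maximum edge weight of C. Then the minimum cost opt of an exploration strategy satisfies q + w(C) − w_max ≤ opt ≤ 2q + w(C) − w_max. -/
open SimpleGraph

/-- An exploration strategy on a graph `G` from homebase `h`: a nonempty finite
family of walks, each starting at `h`, that together visit every vertex. -/
structure ExplStrategy {V : Type*} (G : SimpleGraph V) (h : V) where
  k : ℕ
  kpos : 0 < k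
  ends : Fin k → V
  walks : (i : Fin k) → G.Walk h (ends i)
  covers : ∀ v : V, ∃ i, v ∈ (walks i).support

/-- The weight of a walk: the sum of the weights of its edges, with multiplicity. -/
def walkWeight {V : Type*} {G : SimpleGraph V} (w : Sym2 V → ℝ) {a b : V}
    (p : G.Walk a b) : ℝ := (p.edges.map w).sum

/-- Cost of a strategy: `k·q` plus the total distance traversed. -/
noncomputable def stratCost {V : Type*} {G : SimpleGraph V} {h : V}
    (w : Sym2 V → ℝ) (q : ℝ) (S : ExplStrategy G h) : ℝ :=
  (S.k : ℝ) * q + ∑ i, walkWeight w (S.walks i)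

/-- Weighted distance between two vertices: infimum of weights of connecting walks. -/
noncomputable def wdist {V : Type*} (G : SimpleGraph V) (w : Sym2 V → ℝ) (u x : V) : ℝ :=
  sInf {c : ℝ | ∃ p : G.Walk u x, walkWeight w p = c}

/-- The ring (cycle graph) on `Fin n`, with edges `e i = s(i, i+1)`. -/
def ringGraph (n : ℕ) [NeZero n] : SimpleGraph (Fin n) :=
  SimpleGraph.fromRel (fun a b => b = a + 1)

/-!
Lower bound: if two ring edges `s(a, a + 1)` and `s(b, b + 1)` with `a < b` were both unused, then
membership in the arc `Set.Ioc a b` would be invariant along every edge the walks use; as `0` lies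
off that arc and `a + 1` on it, the vertex `a + 1` would never be visited. So the walks use every
edge but at most one, `s(m, m + 1)`, and cost at least `q + w(C) - w s(m, m + 1)`.

Upper bound: for `m` of maximal edge weight, walk forward from `0` to `m` and backward from `0`
to `m + 1`; the two walks cover the ring and use each edge other than `s(m, m + 1)` exactly once.
-/

namespace SimpleGraph.Walk

variable {V : Type*} {G : SimpleGraph V}

lemma sum_toFinset_edges_le_walkWeight [DecidableEq V] {w : Sym2 V → ℝ}
    (hw : ∀ e ∈ G.edgeSet, 0 ≤ w e) {u v : V} (p : G.Walk u v) :
    ∑ e ∈ p.edges.toFinset, w e ≤ walkWeight w p := by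
  rw [Finset.sum_eq_multiset_sum, List.toFinset_val, Multiset.map_coe, Multiset.sum_coe,
    walkWeight]
  exact (p.edges.dedup_sublist.map w).sum_le_sum
    (by simpa using fun e he => hw e (p.edges_subset_edgeSet he))

lemma sum_le_sum_walkWeight {ι : Type*} [Fintype ι] [DecidableEq V] {w : Sym2 V → ℝ}
    (hw : ∀ e ∈ G.edgeSet, 0 ≤ w e) {u v : ι → V} (p : ∀ i, G.Walk (u i) (v i))
    {s : Finset (Sym2 V)} (hs : ∀ e ∈ s, ∃ i, e ∈ (p i).edges) :
    ∑ e ∈ s, w e ≤ ∑ i, walkWeight w (p i) := by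
  have hterm : ∀ i e, 0 ≤ if e ∈ (p i).edges then w e else 0 := fun i e => by
    split_ifs with he
    exacts [hw e ((p i).edges_subset_edgeSet he), le_rfl]
  calc ∑ e ∈ s, w e ≤ ∑ e ∈ s, ∑ i, if e ∈ (p i).edges then w e else 0 :=
        Finset.sum_le_sum fun e he => by
          obtain ⟨i, hi⟩ := hs e he
          simpa [hi] using Finset.single_le_sum (fun j _ => hterm j e) (Finset.mem_univ i)
    _ = ∑ i, ∑ e ∈ s with e ∈ (p i).edges, w e := by
        rw [Finset.sum_comm]
        simp only [Finset.sum_filter]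
    _ ≤ ∑ i, walkWeight w (p i) := Finset.sum_le_sum fun i _ =>
        (Finset.sum_le_sum_of_subset_of_nonneg
          (fun e he => by simpa using (Finset.mem_filter.mp he).2)
          fun e he _ => hw e ((p i).edges_subset_edgeSet (List.mem_toFinset.mp he))).trans
        (sum_toFinset_edges_le_walkWeight hw (p i))

lemma iff_of_mem_support {P : V → Prop} {u v : V} (p : G.Walk u v)
    (hP : ∀ x y, s(x, y) ∈ p.edges → (P x ↔ P y)) : ∀ x ∈ p.support, P x ↔ P u := by
  induction p with
  | nil => simp
  | @cons u u' v _ p ih =>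
    have hstep := hP u u' (by simp)
    intro x hx
    rcases List.mem_cons.mp (p.support_cons _ ▸ hx) with rfl | hx
    · rfl
    · exact (ih (fun x y h => hP x y (by simp [h])) x hx).trans hstep.symm

end SimpleGraph.Walk

section Strategy

variable {V : Type*} {G : SimpleGraph V}

@[simp]
lemma walkWeight_copy (w : Sym2 V → ℝ) {u v u' v' : V} (p : G.Walk u v) (hu : u = u')
    (hv : v = v') : walkWeight w (p.copy hu hv) = walkWeight w p := by
  simp [walkWeight]

@[simp]
lemma walkWeight_reverse (w : Sym2 V → ℝ) {u v : V} (p : G.Walk u v) :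
    walkWeight w p.reverse = walkWeight w p := by
  simp [walkWeight, List.sum_reverse]

def ExplStrategy.pair {h u v : V} (p : G.Walk h u) (p' : G.Walk h v)
    (hcov : ∀ x, x ∈ p.support ∨ x ∈ p'.support) : ExplStrategy G h where
  k := 2
  kpos := two_pos
  ends := ![u, v]
  walks i := match i with
    | 0 => p
    | 1 => p'
  covers x := (hcov x).elim (fun hx => ⟨0, hx⟩) (fun hx => ⟨1, hx⟩)

lemma ExplStrategy.stratCost_pair (w : Sym2 V → ℝ) (q : ℝ) {h u v : V} (p : G.Walk h u)
    (p' : G.Walk h v) (hcov : ∀ x, x ∈ p.support ∨ x ∈ p'.support) :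
    stratCost w q (pair p p' hcov) = 2 * q + (walkWeight w p + walkWeight w p') := by
  change ((2 : ℕ) : ℝ) * q + ∑ i : Fin 2, walkWeight w ((pair p p' hcov).walks i) = _
  rw [Fin.sum_univ_two, Nat.cast_two]
  rfl

end Strategy

section RingGraph

variable {n : ℕ} [NeZero n]
open Fin.NatCast Fin.CommRing

lemma ringGraph_adj_iff {x y : Fin n} :
    (ringGraph n).Adj x y ↔ x ≠ y ∧ (y = x + 1 ∨ x = y + 1) :=
  fromRel_adj _ _ _

lemma ringGraph_adj_add_one (hn : 1 < n) (x : Fin n) : (ringGraph n).Adj x (x + 1) := by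
  refine ringGraph_adj_iff.mpr ⟨fun h => ?_, Or.inl rfl⟩
  have : (1 : Fin n) = 0 := left_eq_add.mp h
  rw [Fin.one_eq_zero_iff] at this
  omega

lemma exists_eq_of_mem_edgeSet_ringGraph {e : Sym2 (Fin n)} (he : e ∈ (ringGraph n).edgeSet) :
    ∃ i : Fin n, e = s(i, i + 1) := by
  induction e using Sym2.ind with
  | h x y =>
    rw [mem_edgeSet, ringGraph_adj_iff] at he
    obtain ⟨-, rfl | rfl⟩ := he
    exacts [⟨x, rfl⟩, ⟨y, Sym2.eq_swap⟩]

lemma ringEdge_injective (hn : 3 ≤ n) : Function.Injective fun i : Fin n => s(i, i + 1) := by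
  intro i j hij
  rcases Sym2.eq_iff.mp hij with ⟨h, -⟩ | ⟨h₁, h₂⟩
  · exact h
  · have : ((2 : ℕ) : Fin n) = 0 := by push_cast; linear_combination h₂ - h₁
    have := Nat.le_of_dvd two_pos (Fin.natCast_eq_zero.mp this)
    omega

lemma add_one_mem_Ioc_iff {a b x : Fin n} (hxa : x ≠ a) (hxb : x ≠ b) :
    x + 1 ∈ Set.Ioc a b ↔ x ∈ Set.Ioc a b := by
  simp only [Set.mem_Ioc, Fin.lt_def, Fin.le_def]
  rw [Ne, Fin.ext_iff] at hxa hxb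
  by_cases hx : x.val + 1 < n
  · rw [Fin.val_add_one_of_lt' hx]
    omega
  · have hzero : x + 1 = 0 := by
      rw [← Fin.cast_val_eq_self x, ← Nat.cast_add_one, show x.val + 1 = n by omega,
        Fin.natCast_self]
    have := b.isLt
    simp only [hzero, Fin.val_zero]
    omega

lemma mem_Ioc_iff_of_mem_support {a b u v : Fin n} (p : (ringGraph n).Walk u v)
    (ha : s(a, a + 1) ∉ p.edges) (hb : s(b, b + 1) ∉ p.edges) :
    ∀ x ∈ p.support, x ∈ Set.Ioc a b ↔ u ∈ Set.Ioc a b := by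
  refine p.iff_of_mem_support fun x y hxy => ?_
  obtain ⟨-, rfl | rfl⟩ := ringGraph_adj_iff.mp (p.adj_of_mem_edges hxy)
  · exact (add_one_mem_Ioc_iff (by rintro rfl; exact ha hxy) (by rintro rfl; exact hb hxy)).symm
  · rw [Sym2.eq_swap] at hxy
    exact add_one_mem_Ioc_iff (by rintro rfl; exact ha hxy) (by rintro rfl; exact hb hxy)

lemma ExplStrategy.exists_mem_edges_ringGraph (S : ExplStrategy (ringGraph n) 0) {a b : Fin n}
    (hab : a < b) :
    ∃ i, s(a, a + 1) ∈ (S.walks i).edges ∨ s(b, b + 1) ∈ (S.walks i).edges := by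
  by_contra! hmiss
  have hsucc : a + 1 ∈ Set.Ioc a b := by
    have hlt : a.val + 1 < n := by have := b.isLt; rw [Fin.lt_def] at hab; omega
    simp only [Set.mem_Ioc, Fin.lt_def, Fin.le_def, Fin.val_add_one_of_lt' hlt]
    rw [Fin.lt_def] at hab
    omega
  obtain ⟨i, hi⟩ := S.covers (a + 1)
  have h0 : (0 : Fin n) ∉ Set.Ioc a b := fun h => Fin.not_lt_zero a h.1
  exact h0 ((mem_Ioc_iff_of_mem_support _ (hmiss i).1 (hmiss i).2 _ hi).mp hsucc)

lemma ExplStrategy.exists_forall_ne_mem_edges_ringGraph (S : ExplStrategy (ringGraph n) 0) :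
    ∃ m : Fin n, ∀ j ≠ m, ∃ i, s(j, j + 1) ∈ (S.walks i).edges := by
  by_contra! hmiss
  obtain ⟨a, -, ha⟩ := hmiss 0
  obtain ⟨b, hba, hb⟩ := hmiss a
  rcases lt_or_gt_of_ne hba.symm with hab | hab
  · obtain ⟨i, hi | hi⟩ := S.exists_mem_edges_ringGraph hab
    exacts [ha i hi, hb i hi]
  · obtain ⟨i, hi | hi⟩ := S.exists_mem_edges_ringGraph hab
    exacts [hb i hi, ha i hi]

lemma le_stratCost_ringGraph (hn : 3 ≤ n) {w : Sym2 (Fin n) → ℝ}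
    (hw : ∀ i : Fin n, 0 ≤ w s(i, i + 1)) {q : ℝ} (hq : 0 ≤ q)
    (S : ExplStrategy (ringGraph n) 0) :
    q + ((∑ j : Fin n, w s(j, j + 1)) -
        Finset.univ.sup' Finset.univ_nonempty (fun i : Fin n => w s(i, i + 1)))
      ≤ stratCost w q S := by
  classical
  obtain ⟨m, hm⟩ := S.exists_forall_ne_mem_edges_ringGraph
  have hw' : ∀ e ∈ (ringGraph n).edgeSet, 0 ≤ w e := fun e he => by
    obtain ⟨i, rfl⟩ := exists_eq_of_mem_edgeSet_ringGraph he
    exact hw i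
  have hwalks : (∑ j : Fin n, w s(j, j + 1)) - w s(m, m + 1)
      ≤ ∑ i, walkWeight w (S.walks i) := by
    rw [← Finset.sum_erase_eq_sub (Finset.mem_univ m),
      ← Finset.sum_image (ringEdge_injective hn).injOn]
    refine Walk.sum_le_sum_walkWeight hw' S.walks fun e he => ?_
    obtain ⟨j, hj, rfl⟩ := Finset.mem_image.mp he
    exact hm j (Finset.ne_of_mem_erase hj)
  have hmax := Finset.le_sup' (fun i : Fin n => w s(i, i + 1)) (Finset.mem_univ m)
  have hk : q ≤ S.k * q := le_mul_of_one_le_left hq (by exact_mod_cast S.kpos)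
  rw [stratCost]
  linarith

def ringWalk (hn : 1 < n) (x : Fin n) : (k : ℕ) → (ringGraph n).Walk x (x + k)
  | 0 => Walk.nil.copy rfl (by simp)
  | k + 1 => ((ringWalk hn x k).concat (ringGraph_adj_add_one hn _)).copy rfl (by push_cast; ring)

lemma add_mem_support_ringWalk (hn : 1 < n) (x : Fin n) {j k : ℕ} (hjk : j ≤ k) :
    x + (j : Fin n) ∈ (ringWalk hn x k).support := by
  induction k with
  | zero => simp [Nat.le_zero.mp hjk]
  | succ k ih =>
    rcases hjk.eq_or_lt with rfl | hjk
    · exact Walk.end_mem_support _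
    rw [ringWalk, Walk.support_copy, Walk.support_concat]
    exact List.mem_append_left _ (ih (Nat.lt_succ_iff.mp hjk))

lemma walkWeight_ringWalk (hn : 1 < n) (w : Sym2 (Fin n) → ℝ) (x : Fin n) (k : ℕ) :
    walkWeight w (ringWalk hn x k) = ∑ j ∈ Finset.range k, w s(x + j, x + j + 1) := by
  induction k with
  | zero => simp [ringWalk, walkWeight]
  | succ k ih =>
    rw [ringWalk, walkWeight_copy, walkWeight, Walk.edges_concat, List.concat_eq_append,
      List.map_append, List.sum_append, ← walkWeight, ih, Finset.sum_range_succ]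
    simp

lemma exists_stratCost_eq_ringGraph (hn : 1 < n) (w : Sym2 (Fin n) → ℝ) (q : ℝ) (m : Fin n) :
    ∃ S : ExplStrategy (ringGraph n) 0,
      stratCost w q S = 2 * q + ((∑ j : Fin n, w s(j, j + 1)) - w s(m, m + 1)) := by
  set k := n - 1 - m.val
  have hcast : ∀ j : ℕ, m + 1 + (j : Fin n) = ((m.val + 1 + j : ℕ) : Fin n) := fun j => by
    push_cast [Fin.cast_val_eq_self]
    ring
  have hend₁ : (0 : Fin n) + (m.val : Fin n) = m := by simp
  have hend₂ : m + 1 + (k : Fin n) = 0 := by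
    rw [hcast, show m.val + 1 + k = n by omega, Fin.natCast_self]
  let p₁ := (ringWalk hn 0 m.val).copy rfl hend₁
  let p₂ := ((ringWalk hn (m + 1) k).copy rfl hend₂).reverse
  have hcov : ∀ v, v ∈ p₁.support ∨ v ∈ p₂.support := fun v => by
    by_cases hv : v.val ≤ m.val
    · left
      simpa [p₁] using add_mem_support_ringWalk hn 0 hv
    · right
      have hv' : v = m + 1 + ((v.val - m.val - 1 : ℕ) : Fin n) := by
        rw [hcast, show m.val + 1 + (v.val - m.val - 1) = v.val by omega, Fin.cast_val_eq_self]
      simp only [p₂, Walk.support_reverse, List.mem_reverse, Walk.support_copy]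
      exact hv' ▸ add_mem_support_ringWalk hn (m + 1) (by omega)
  refine ⟨.pair p₁ p₂ hcov, ?_⟩
  set f : ℕ → ℝ := fun j => w s((j : Fin n), (j : Fin n) + 1)
  have hsplit : ∑ j : Fin n, w s(j, j + 1) = ∑ j ∈ Finset.range m.val, f j + f m.val +
      ∑ j ∈ Finset.range k, f (m.val + 1 + j) := by
    rw [← Finset.sum_range_succ, ← Finset.sum_range_add, show m.val + 1 + k = n by omega,
      ← Fin.sum_univ_eq_sum_range]
    simp [f]
  rw [ExplStrategy.stratCost_pair, walkWeight_copy, walkWeight_reverse, walkWeight_copy,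
    walkWeight_ringWalk, walkWeight_ringWalk, hsplit]
  simp only [f, zero_add, hcast, Fin.cast_val_eq_self]
  ring

end RingGraph

/-- For an edge-weighted ring `C` on `n ≥ 3` vertices with homebase `v_0` and invoking
cost `q ≥ 0`, the minimum exploration cost `opt` satisfies
`q + w(C) - w_max ≤ opt ≤ 2q + w(C) - w_max`, where `w_max` is the maximum edge weight. -/
theorem ring_opt_bounds (n : ℕ) [NeZero n] (hn : 3 ≤ n)
    (w : Sym2 (Fin n) → ℝ) (hw : ∀ i : Fin n, 0 < w s(i, i + 1))
    (q : ℝ) (hq : 0 ≤ q) :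
    q + ((∑ j : Fin n, w s(j, j + 1)) -
        Finset.univ.sup' (Finset.univ_nonempty_iff.mpr ⟨0⟩) (fun i : Fin n => w s(i, i + 1)))
      ≤ sInf {c : ℝ | ∃ S : ExplStrategy (ringGraph n) 0, stratCost w q S = c} ∧
    sInf {c : ℝ | ∃ S : ExplStrategy (ringGraph n) 0, stratCost w q S = c}
      ≤ 2 * q + ((∑ j : Fin n, w s(j, j + 1)) -
        Finset.univ.sup' (Finset.univ_nonempty_iff.mpr ⟨0⟩) (fun i : Fin n => w s(i, i + 1))) := by
  have hlower : ∀ c ∈ {c : ℝ | ∃ S : ExplStrategy (ringGraph n) 0, stratCost w q S = c},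
      q + ((∑ j : Fin n, w s(j, j + 1)) -
        Finset.univ.sup' Finset.univ_nonempty (fun i : Fin n => w s(i, i + 1))) ≤ c := by
    rintro _ ⟨S, rfl⟩
    exact le_stratCost_ringGraph hn (fun i => (hw i).le) hq S
  obtain ⟨m, -, hm⟩ := Finset.exists_mem_eq_sup' Finset.univ_nonempty
    (fun i : Fin n => w s(i, i + 1))
  obtain ⟨S, hS⟩ := exists_stratCost_eq_ringGraph (by omega) w q m
  refine ⟨le_csInf ⟨_, S, rfl⟩ hlower, ?_⟩
  rw [hm, ← hS]
  exact csInf_le ⟨_, hlower⟩ ⟨S, rfl⟩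
end

section
/- Let T be a finite edge-weighted tree with at least two vertices, rooted at the homebase r, with invoking cost q ≥ 0, and let S be a cost-optimal exploration strategy for T. Then for every vertex v ≠ r, if a walk of S visits at least one vertex of the subtree T_v and afterwards visits a vertex outside T_v, then that walk visits every vertex of T_v; that is, if an agent leaves a subtree, it has explored the subtree on its own. -/
open SimpleGraph

/-- A strategy is cost-optimal if no exploration strategy has strictly smaller cost. -/
def IsOptimal {V : Type*} {G : SimpleGraph V} {h : V} (w : Sym2 V → ℝ) (q : ℝ)
    (S : ExplStrategy G h) : Prop :=
  ∀ S' : ExplStrategy G h, stratCost w q S ≤ stratCost w q S'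

/-- `u` belongs to the subtree `T_v` of the tree `G` rooted at `r`:
`v` lies on every (equivalently, in a tree, the unique) path from `r` to `u`. -/
def InSubtree {V : Type*} (G : SimpleGraph V) (r v u : V) : Prop :=
  ∀ p : G.Path r u, v ∈ p.1.support

/-- `x` is a leaf of the tree `G` rooted at `r`: a vertex of degree 1 different
from the root. -/
def IsTLeaf {V : Type*} (G : SimpleGraph V) (r x : V) : Prop :=
  x ≠ r ∧ ∃! y, G.Adj x y

/-- `u` is a child of `v` in the tree `G` rooted at `r`. -/
def IsTChild {V : Type*} (G : SimpleGraph V) (r v u : V) : Prop :=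
  G.Adj v u ∧ InSubtree G r v u

open scoped Classical in
/-- Total edge weight of the graph `G`. -/
noncomputable def totalWeight {V : Type*} [Fintype V] (G : SimpleGraph V)
    (w : Sym2 V → ℝ) : ℝ :=
  ∑ e : Sym2 V, if e ∈ G.edgeSet then w e else 0

/-
If an agent leaves `T_v` through the edge `{v, p}` to the parent `p` of `v`, cut its walk at
its first arrival at `v`: it reads `A · (p → v) · I · (v → p) · W`, where `A` reaches `p`
avoiding `v` and `I` is a closed walk at `v`. A vertex of `T_v` missed by this agent is seen
by another one, which therefore passes through `v`. Handing the excursion `I` over to that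
agent at `v` and letting the first one continue as `A · W` keeps every vertex visited while
saving the two traversals of `{v, p}`, contradicting optimality.
-/

open SimpleGraph

section WalkWeight

variable {V : Type*} {G : SimpleGraph V} (w : Sym2 V → ℝ) {x y z : V}

lemma walkWeight_append (p : G.Walk x y) (p' : G.Walk y z) :
    walkWeight w (p.append p') = walkWeight w p + walkWeight w p' := by
  simp [walkWeight, Walk.edges_append]

lemma walkWeight_cons (h : G.Adj x y) (p : G.Walk y z) :
    walkWeight w (Walk.cons h p) = w s(x, y) + walkWeight w p := by
  simp [walkWeight]

lemma walkWeight_concat (p : G.Walk x y) (h : G.Adj y z) :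
    walkWeight w (p.concat h) = walkWeight w p + w s(y, z) := by
  simp [walkWeight, Walk.edges_concat]

end WalkWeight

namespace SimpleGraph.Walk

variable {V : Type*} {G : SimpleGraph V}

lemma support_getD_eq_getVert {u v : V} (p : G.Walk u v) {n : ℕ} (hn : n ≤ p.length) (x : V) :
    p.support.getD n x = p.getVert n := by
  rw [List.getD_eq_getElem _ _ (by rw [length_support]; omega),
    ← getVert_eq_support_getElem p hn]

lemma exists_boundary_dart_of_getVert {u v : V} (p : G.Walk u v) (S : Set V) {i j : ℕ}
    (hij : i ≤ j) (hi : p.getVert i ∈ S) (hj : p.getVert j ∉ S) :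
    ∃ d ∈ p.darts, d.fst ∈ S ∧ d.snd ∉ S := by
  have hend : (p.drop i).getVert (j - i) = p.getVert j := by
    rw [drop_getVert, Nat.add_sub_cancel' hij]
  obtain ⟨d, hd, hdS⟩ := ((p.drop i).take (j - i)).exists_boundary_dart S hi (hend ▸ hj)
  refine ⟨d, ?_, hdS⟩
  rw [darts_take, darts_drop] at hd
  exact List.drop_subset _ _ (List.take_subset _ _ hd)

lemma exists_eq_append_cons_of_mem_darts {u v : V} (p : G.Walk u v) {d : G.Dart}
    (hd : d ∈ p.darts) :
    ∃ (p₁ : G.Walk u d.fst) (p₂ : G.Walk d.snd v), p = p₁.append (cons d.adj p₂) := by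
  induction p with
  | nil => simp at hd
  | cons h p ih =>
    rcases List.mem_cons.mp hd with rfl | hd
    · exact ⟨nil, p, rfl⟩
    · obtain ⟨p₁, p₂, rfl⟩ := ih hd
      exact ⟨cons h p₁, p₂, rfl⟩

lemma exists_eq_concat_append_of_mem_support {u v x : V} (p : G.Walk u x)
    (hv : v ∈ p.support) (huv : u ≠ v) :
    ∃ (z : V) (h : G.Adj z v) (A : G.Walk u z) (I : G.Walk v x),
      v ∉ A.support ∧ p = (A.concat h).append I := by
  classical
  have hnil : ¬ (p.takeUntil v hv).Nil := not_nil_of_ne huv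
  have hadj := adj_penultimate hnil
  refine ⟨_, hadj, (p.takeUntil v hv).dropLast, p.dropUntil v hv, ?_, ?_⟩
  · have hcount := p.count_support_takeUntil_eq_one hv
    rw [← concat_dropLast hadj, support_concat, List.count_append,
      List.count_singleton_self] at hcount
    exact List.count_eq_zero.mp (by omega)
  · rw [concat_dropLast, take_spec]

end SimpleGraph.Walk

namespace SimpleGraph

variable {V : Type*} {G : SimpleGraph V} {r v : V}

lemma InSubtree.mem_support {u : V} (h : InSubtree G r v u) (p : G.Walk r u) :
    v ∈ p.support := by
  classical
  exact p.support_bypass_subset_support (h ⟨p.bypass, p.bypass_isPath⟩)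

lemma not_inSubtree_of_not_mem_support {u : V} (p : G.Walk r u) (hp : v ∉ p.support) :
    ¬ InSubtree G r v u :=
  fun h => hp (h.mem_support p)

lemma inSubtree_root (u : V) : InSubtree G r r u :=
  fun p => p.1.start_mem_support

lemma exists_path_of_not_inSubtree {y : V} (hy : ¬ InSubtree G r v y) :
    ∃ p : G.Path r y, v ∉ p.1.support := by
  simpa [InSubtree] using hy

lemma InSubtree.eq_of_adj {x y : V} (hx : InSubtree G r v x) (hy : ¬ InSubtree G r v y)
    (hadj : G.Adj y x) : x = v := by
  obtain ⟨p, hp⟩ := exists_path_of_not_inSubtree hy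
  have := hx.mem_support (p.1.concat hadj)
  rw [Walk.support_concat, List.mem_append] at this
  simpa [hp, eq_comm] using this

lemma IsAcyclic.eq_of_adj_of_not_inSubtree (hG : G.IsAcyclic) {y₁ y₂ : V}
    (h₁ : ¬ InSubtree G r v y₁) (h₂ : ¬ InSubtree G r v y₂)
    (ha₁ : G.Adj y₁ v) (ha₂ : G.Adj y₂ v) : y₁ = y₂ := by
  obtain ⟨p₁, hp₁⟩ := exists_path_of_not_inSubtree h₁
  obtain ⟨p₂, hp₂⟩ := exists_path_of_not_inSubtree h₂
  have := (hG.subsingleton_path r v).elim ⟨_, p₁.2.concat hp₁ ha₁⟩ ⟨_, p₂.2.concat hp₂ ha₂⟩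
  exact (Walk.concat_inj (congrArg Subtype.val this)).1

end SimpleGraph

namespace IsOptimal

variable {V : Type*} {G : SimpleGraph V} {h : V} {w : Sym2 V → ℝ} {q : ℝ}
  {S : ExplStrategy G h}

lemma walkWeight_add_le (hS : IsOptimal w q S) {a c : Fin S.k} (hac : a ≠ c)
    (pa : G.Walk h (S.ends a)) (pc : G.Walk h (S.ends c))
    (hcov : ∀ x, x ∈ (S.walks a).support ∨ x ∈ (S.walks c).support →
      x ∈ pa.support ∨ x ∈ pc.support) :
    walkWeight w (S.walks a) + walkWeight w (S.walks c) ≤ walkWeight w pa + walkWeight w pc := by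
  set walks' := Function.update (Function.update S.walks a pa) c pc
  have ha : walks' a = pa := by simp [walks', hac]
  have hc : walks' c = pc := by simp [walks']
  have hother : ∀ i, i ≠ a ∧ i ≠ c → walks' i = S.walks i := fun i hi => by
    simp [walks', hi.1, hi.2]
  have hcov' : ∀ x, ∃ i, x ∈ (walks' i).support := by
    intro x
    obtain ⟨i, hi⟩ := S.covers x
    by_cases hia : i = a
    · subst hia
      rcases hcov x (.inl hi) with hx | hx
      exacts [⟨i, ha ▸ hx⟩, ⟨c, hc ▸ hx⟩]
    by_cases hic : i = c
    · subst hic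
      rcases hcov x (.inr hi) with hx | hx
      exacts [⟨a, ha ▸ hx⟩, ⟨i, hc ▸ hx⟩]
    exact ⟨i, hother i ⟨hia, hic⟩ ▸ hi⟩
  have hdiff : ∑ i, (walkWeight w (walks' i) - walkWeight w (S.walks i))
      = (walkWeight w pa - walkWeight w (S.walks a))
        + (walkWeight w pc - walkWeight w (S.walks c)) := by
    rw [Fintype.sum_eq_add a c hac fun i hi => by rw [hother i hi, sub_self], ha, hc]
  have hcost := hS ⟨S.k, S.kpos, S.ends, walks', hcov'⟩
  simp only [stratCost] at hcost
  rw [Finset.sum_sub_distrib] at hdiff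
  linarith

end IsOptimal

theorem leaving_agent_explored_subtree_general {V : Type*} [Fintype V]
    (G : SimpleGraph V) (hG : G.IsTree)
    (r : V) (w : Sym2 V → ℝ) (hw : ∀ e ∈ G.edgeSet, 0 < w e)
    (q : ℝ)
    (S : ExplStrategy G r) (hS : IsOptimal w q S)
    (v : V) (a : Fin S.k)
    (hleave : ∃ i j : ℕ, i < j ∧ j < (S.walks a).support.length ∧
        InSubtree G r v ((S.walks a).support.getD i r) ∧
        ¬ InSubtree G r v ((S.walks a).support.getD j r)) :
    ∀ u, InSubtree G r v u → u ∈ (S.walks a).support := by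
  classical
  intro u hu
  by_contra hua
  obtain ⟨i, j, hij, hj, hi_in, hj_out⟩ := hleave
  have hlen := (S.walks a).length_support
  rw [Walk.support_getD_eq_getVert _ (by omega)] at hi_in hj_out
  obtain ⟨⟨⟨x, y⟩, hxy⟩, hd, hx, hy⟩ :=
    (S.walks a).exists_boundary_dart_of_getVert {x | InSubtree G r v x} hij.le hi_in hj_out
  obtain rfl : v = x := (InSubtree.eq_of_adj hx hy hxy.symm).symm
  have hvr : v ≠ r := fun hvr => hy (hvr ▸ inSubtree_root y)
  obtain ⟨W₁, W₂, hWa⟩ := (S.walks a).exists_eq_append_cons_of_mem_darts hd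
  obtain ⟨z, hyv, A, I, hxA, hW₁⟩ :=
    W₁.exists_eq_concat_append_of_mem_support W₁.end_mem_support hvr.symm
  obtain rfl : y = z := (hG.isAcyclic.eq_of_adj_of_not_inSubtree
    (not_inSubtree_of_not_mem_support A hxA) hy hyv hxy.symm).symm
  obtain ⟨c, hc⟩ := S.covers u
  have hca : c ≠ a := fun h => hua (h ▸ hc)
  obtain ⟨B₁, B₂, hWc⟩ := Walk.mem_support_iff_exists_append.mp
    ((S.walks c).support_takeUntil_subset_support hc (hu.mem_support _))
  have hcost := hS.walkWeight_add_le hca.symm (A.append W₂) (B₁.append (I.append B₂)) (by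
    intro x
    rw [hWa, hW₁, hWc]
    simp only [Walk.mem_support_append_iff, Walk.support_concat, List.mem_append,
      Walk.support_cons, List.mem_cons, List.not_mem_nil, or_false]
    rintro ((((hx | rfl) | hx) | rfl | hx) | hx | hx)
    all_goals simp [hx, Walk.end_mem_support])
  have hvy : 0 < w s(v, y) := hw _ hxy
  rw [hWa, hW₁, hWc] at hcost
  simp only [walkWeight_append, walkWeight_cons, walkWeight_concat, Sym2.eq_swap] at hcost
  linarith

/-- In every cost-optimal exploration strategy of an edge-weighted tree with at least
two vertices, if a walk visits a vertex of the subtree `T_v` (`v ≠ r`) and afterwards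
visits a vertex outside `T_v`, then that walk visits every vertex of `T_v`:
an agent leaving a subtree has explored it on its own. -/
theorem leaving_agent_explored_subtree {V : Type*} [Fintype V]
    (G : SimpleGraph V) (hG : G.IsTree) (hcard : 1 < Fintype.card V)
    (r : V) (w : Sym2 V → ℝ) (hw : ∀ e ∈ G.edgeSet, 0 < w e)
    (q : ℝ) (hq : 0 ≤ q)
    (S : ExplStrategy G r) (hS : IsOptimal w q S)
    (v : V) (hv : v ≠ r) (a : Fin S.k)
    (hleave : ∃ i j : ℕ, i < j ∧ j < (S.walks a).support.length ∧
        InSubtree G r v ((S.walks a).support.getD i r) ∧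
        ¬ InSubtree G r v ((S.walks a).support.getD j r)) :
    ∀ u, InSubtree G r v u → u ∈ (S.walks a).support :=
  leaving_agent_explored_subtree_general G hG r w hw q S hS v a hleave
end
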